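/- Let $s$ be a bipartite forest on white vertices $\{1,\ldots,m\}$ and black vertices $\{1,\ldots,n\}$ with edge weights $\ell=(\ell_1,\ldots,\ell_{|s|})$, all positive. Let $x_i(s,\ell)$ (resp. $y_i(s,\ell)$) be the sum of weights of edges incident to the $i$-th white (resp. black) vertex. Given compositions $\mathbf{x}$, $\mathbf{y}$ with $x_i = x_i(s,\ell)$ and $y_i = y_i(s,\ell)$ for all $i$, the weight of the $j$-th edge is determined by $\ell_j = \sum_{i \in W(s^\circ_j)} x_i - \sum_{i \in B(s^\circ_j)} y_i$, where $s^\circ_j$ is the connected component of the white endpoint of edge $j$ in the forest $s$ with edge $j$ removed. -/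

import Mathlib

/-!
Summing the vertex weights over the white, resp. black, vertices of the component `s°ⱼ`
counts each edge once for its white and once for its black endpoint lying in `s°ⱼ`. Every
edge `k ≠ j` has both endpoints in `s°ⱼ` or neither, so its contributions cancel; edge `j`
has its white endpoint in `s°ⱼ` and, since `s` is a forest, its black endpoint outside.
-/

open Sum

/-- Adjacency relation on `Fin m ⊕ Fin n` induced by the bipartite edge list `E`,
using only edges with index different from `j`. -/
def bipAdjWithout {m n K : ℕ} (E : Fin K → Fin m × Fin n) (j : Fin K)
    (a b : Fin m ⊕ Fin n) : Prop :=
  ∃ k : Fin K, k ≠ j ∧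
    ((a = inl (E k).1 ∧ b = inr (E k).2) ∨ (b = inl (E k).1 ∧ a = inr (E k).2))

open Finset

theorem Finset.sum_fiberwise_ite {ι α G : Type*} [Fintype ι] [Fintype α] [DecidableEq α]
    [AddCommMonoid G] (f : ι → α) (w : ι → G) (P : α → Prop) [DecidablePred P] :
    ∑ a, (if P a then ∑ k ∈ univ.filter (fun k => f k = a), w k else 0)
      = ∑ k, if P (f k) then w k else 0 := by
  rw [← sum_fiberwise univ f]
  refine sum_congr rfl fun a _ => ?_
  rw [ite_sum_zero]
  exact sum_congr rfl fun k hk => by rw [(mem_filter.1 hk).2]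

theorem reflTransGen_bipAdjWithout_inl_iff_inr {m n K : ℕ} {E : Fin K → Fin m × Fin n}
    {j k : Fin K} (hkj : k ≠ j) (v : Fin m ⊕ Fin n) :
    Relation.ReflTransGen (bipAdjWithout E j) v (inl (E k).1)
      ↔ Relation.ReflTransGen (bipAdjWithout E j) v (inr (E k).2) :=
  ⟨fun h => h.tail ⟨k, hkj, .inl ⟨rfl, rfl⟩⟩, fun h => h.tail ⟨k, hkj, .inr ⟨rfl, rfl⟩⟩⟩

open scoped Classical in
theorem edge_weight_determined_general (m n K : ℕ) (E : Fin K → Fin m × Fin n) (ℓ : Fin K → ℕ)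
    (hforest : ∀ j : Fin K,
      ¬ Relation.ReflTransGen (bipAdjWithout E j) (inl (E j).1) (inr (E j).2))
    (x : Fin m → ℕ) (y : Fin n → ℕ)
    (hx : ∀ i, x i = ∑ k ∈ Finset.univ.filter (fun k : Fin K => (E k).1 = i), ℓ k)
    (hy : ∀ i, y i = ∑ k ∈ Finset.univ.filter (fun k : Fin K => (E k).2 = i), ℓ k)
    (j : Fin K) :
    (ℓ j : ℤ)
      = (∑ i : Fin m,
          if Relation.ReflTransGen (bipAdjWithout E j) (inl (E j).1) (inl i)
          then (x i : ℤ) else 0)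
      - ∑ i : Fin n,
          if Relation.ReflTransGen (bipAdjWithout E j) (inl (E j).1) (inr i)
          then (y i : ℤ) else 0 := by
  set R := Relation.ReflTransGen (bipAdjWithout E j) (inl (E j).1)
  have hedge : ∀ k, ((if R (inl (E k).1) then (ℓ k : ℤ) else 0)
      - if R (inr (E k).2) then (ℓ k : ℤ) else 0) = if k = j then (ℓ j : ℤ) else 0 := by
    intro k
    by_cases hkj : k = j
    · subst hkj
      rw [if_pos .refl, if_neg (hforest k), if_pos rfl, sub_zero]
    · simp only [R, reflTransGen_bipAdjWithout_inl_iff_inr hkj, sub_self, hkj, if_false]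
  simp only [hx, hy, Nat.cast_sum]
  rw [sum_fiberwise_ite (fun k => (E k).1) (fun k => (ℓ k : ℤ)) (fun i => R (inl i)),
    sum_fiberwise_ite (fun k => (E k).2) (fun k => (ℓ k : ℤ)) (fun i => R (inr i)),
    ← sum_sub_distrib, sum_congr rfl fun k _ => hedge k, sum_ite_eq' univ j,
    if_pos (mem_univ j)]

open scoped Classical in
/-- In a bipartite forest with positive edge weights `ℓ`, if the type
`(x, y)` is given by the weight-sums at the white and black vertices, then the weight of
the `j`-th edge is recovered as `ℓ j = ∑_{i ∈ W(s°_j)} x i - ∑_{i ∈ B(s°_j)} y i`, where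
`s°_j` is the connected component of the white endpoint of edge `j` after removing edge
`j`. -/
theorem edge_weight_determined (m n K : ℕ) (E : Fin K → Fin m × Fin n) (ℓ : Fin K → ℕ)
    (hpos : ∀ k, 0 < ℓ k) (hinj : Function.Injective E)
    (hforest : ∀ j : Fin K,
      ¬ Relation.ReflTransGen (bipAdjWithout E j) (inl (E j).1) (inr (E j).2))
    (x : Fin m → ℕ) (y : Fin n → ℕ)
    (hx : ∀ i, x i = ∑ k ∈ Finset.univ.filter (fun k : Fin K => (E k).1 = i), ℓ k)
    (hy : ∀ i, y i = ∑ k ∈ Finset.univ.filter (fun k : Fin K => (E k).2 = i), ℓ k)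
    (j : Fin K) :
    (ℓ j : ℤ)
      = (∑ i : Fin m,
          if Relation.ReflTransGen (bipAdjWithout E j) (inl (E j).1) (inl i)
          then (x i : ℤ) else 0)
      - ∑ i : Fin n,
          if Relation.ReflTransGen (bipAdjWithout E j) (inl (E j).1) (inr i)
          then (y i : ℤ) else 0 :=
  edge_weight_determined_general m n K E ℓ hforest x y hx hy j
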